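/- arXiv:1509.04320 — 2 statements merged into one kernel-verified Lean document; each statement's English description precedes it below -/
import Mathlib

section
/- For the unit ball b_∞^m of ℓ_∞^m viewed as a subset of ℓ_1^m with n < m, the Kolmogorov n-width satisfies d_n(b_∞^m, ℓ_1^m) = m − n. -/
/-!
For the upper bound, keep `n` coordinates: every other coordinate of a point of the cube
contributes at most `1` to the `ℓ₁` distance.

For the lower bound, let `dim Z ≤ n`. The vectors dot-orthogonal to `Z` form a subspace `W` of
dimension at least `m - n`, and an extreme point `y` of `W ∩ b_∞^m` has at least `dim W`
coordinates equal to `±1`: a vector of `W` vanishing on them would let `y` move in both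
directions inside `W ∩ b_∞^m`. With `x = sign y`, every `z ∈ Z` satisfies
`‖x - z‖₁ ≥ ⟪x - z, y⟫ = ⟪x, y⟫ = ‖y‖₁ ≥ m - n`.
-/

open scoped ENNReal

/-- Kolmogorov n-width. -/
noncomputable def kolWidth {Y : Type*} [NormedAddCommGroup Y] [NormedSpace ℝ Y]
    (n : ℕ) (H : Set Y) : ℝ≥0∞ :=
  ⨅ (Z : Submodule ℝ Y) (_ : FiniteDimensional ℝ Z ∧ Module.finrank ℝ Z ≤ n),
    ⨆ x ∈ H, ⨅ z ∈ (Z : Set Y), edist x z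

open Module Filter Topology
open scoped Finset

section Cube

variable {ι : Type*} [Fintype ι]

theorem Submodule.eq_zero_of_mem_extremePoints_of_forall_abs_eq_one {W : Submodule ℝ (ι → ℝ)}
    {y : ι → ℝ} (hy : y ∈ ((W : Set (ι → ℝ)) ∩ Metric.closedBall 0 1).extremePoints ℝ)
    {w : ι → ℝ} (hw : w ∈ W) (hw₀ : ∀ i, |y i| = 1 → w i = 0) : w = 0 := by
  obtain ⟨⟨hyW, hy₁⟩, hext⟩ := hy
  simp only [mem_closedBall_zero_iff, pi_norm_le_iff_of_nonneg zero_le_one,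
    Real.norm_eq_abs] at hy₁
  have hnear : ∀ᶠ t in 𝓝 (0 : ℝ), y + t • w ∈ (W : Set (ι → ℝ)) ∩ Metric.closedBall 0 1 := by
    simp only [Set.mem_inter_iff, SetLike.mem_coe, mem_closedBall_zero_iff,
      pi_norm_le_iff_of_nonneg zero_le_one, Pi.add_apply, Pi.smul_apply, smul_eq_mul,
      Real.norm_eq_abs, W.add_mem hyW (W.smul_mem _ hw), true_and, eventually_all]
    intro i
    rcases (hy₁ i).eq_or_lt with hi | hi
    · filter_upwards with t
      simp [hw₀ i hi, hi]
    · exact Tendsto.eventually_le_const hi (Continuous.tendsto' (by fun_prop) _ _ (by simp))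
  obtain ⟨ε, hε, hball⟩ := Metric.eventually_nhds_iff.1 hnear
  set t := ε / 2
  have ht₀ : 0 < t := half_pos hε
  have ht : dist t 0 < ε ∧ dist (-t) 0 < ε := by
    simp only [Real.dist_0_eq_abs, abs_neg, and_self, abs_of_pos ht₀]
    exact half_lt_self hε
  have hsegment : y ∈ openSegment ℝ (y + (-t) • w) (y + t • w) :=
    ⟨1 / 2, 1 / 2, by norm_num, by norm_num, by norm_num, by module⟩
  have hyw : y + (-t) • w = y := hext (hball ht.2) (hball ht.1) hsegment
  simpa [ht₀.ne'] using hyw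

theorem Submodule.exists_abs_le_one_finrank_le_card_abs_eq_one (W : Submodule ℝ (ι → ℝ)) :
    ∃ y ∈ W, (∀ i, |y i| ≤ 1) ∧ finrank ℝ W ≤ #{i | |y i| = 1} := by
  classical
  have hcompact : IsCompact ((W : Set (ι → ℝ)) ∩ Metric.closedBall 0 1) :=
    (isCompact_closedBall 0 1).inter_left W.closed_of_finiteDimensional
  obtain ⟨y, hy⟩ := hcompact.extremePoints_nonempty ⟨0, W.zero_mem, by simp⟩
  obtain ⟨hyW, hy₁⟩ := hy.1
  set S : Finset ι := {i | |y i| = 1}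
  have hrestrict : Function.Injective (LinearMap.funLeft ℝ ℝ ((↑) : S → ι) ∘ₗ W.subtype) := by
    rw [← LinearMap.ker_eq_bot, LinearMap.ker_eq_bot']
    intro w hw
    refine Subtype.ext (W.eq_zero_of_mem_extremePoints_of_forall_abs_eq_one hy w.2 fun i hi => ?_)
    simpa using congrFun hw ⟨i, by simpa [S] using hi⟩
  refine ⟨y, hyW, ?_, ?_⟩
  · simpa [pi_norm_le_iff_of_nonneg zero_le_one] using hy₁
  · simpa using LinearMap.finrank_le_finrank_of_injective hrestrict

theorem Submodule.exists_dotProduct_eq_zero_card_sub_finrank_le_sum_abs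
    (Z : Submodule ℝ (ι → ℝ)) :
    ∃ y : ι → ℝ, (∀ z ∈ Z, z ⬝ᵥ y = 0) ∧ (∀ i, |y i| ≤ 1) ∧
      ((Fintype.card ι - finrank ℝ Z : ℕ) : ℝ) ≤ ∑ i, |y i| := by
  classical
  set W := Z.dualAnnihilator.map (dotProductEquiv ℝ ι).symm.toLinearMap
  have hW : finrank ℝ Z + finrank ℝ W = Fintype.card ι := by
    rw [LinearEquiv.finrank_map_eq, Subspace.finrank_add_finrank_dualAnnihilator_eq,
      finrank_fintype_fun_eq_card]
  obtain ⟨y, hyW, hy₁, hcard⟩ := W.exists_abs_le_one_finrank_le_card_abs_eq_one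
  rw [Submodule.mem_map_equiv, LinearEquiv.symm_symm, Submodule.mem_dualAnnihilator] at hyW
  refine ⟨y, fun z hz => by simpa [dotProduct_comm] using hyW z hz, hy₁, ?_⟩
  calc ((Fintype.card ι - finrank ℝ Z : ℕ) : ℝ) ≤ #{i | |y i| = 1} := by
        exact_mod_cast (by omega : Fintype.card ι - finrank ℝ Z ≤ #{i | |y i| = 1})
    _ = ∑ i ∈ {i | |y i| = 1}, |y i| := by
        rw [Finset.sum_congr rfl fun i hi => (Finset.mem_filter.1 hi).2]; simp
    _ ≤ ∑ i, |y i| := Finset.sum_le_sum_of_subset_of_nonneg (Finset.subset_univ _)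
        fun i _ _ => abs_nonneg _

theorem dotProduct_le_sum_abs_of_abs_le_one {v y : ι → ℝ} (hy : ∀ i, |y i| ≤ 1) :
    v ⬝ᵥ y ≤ ∑ i, |v i| :=
  Finset.sum_le_sum fun i _ => calc
    v i * y i ≤ |v i| * |y i| := by rw [← abs_mul]; exact le_abs_self _
    _ ≤ |v i| := mul_le_of_le_one_right (abs_nonneg _) (hy i)

theorem PiLp.exists_abs_le_one_card_sub_finrank_le_dist_of_L1
    (Z : Submodule ℝ (PiLp 1 fun _ : ι => ℝ)) :
    ∃ x : PiLp 1 (fun _ : ι => ℝ), (∀ i, |x i| ≤ 1) ∧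
      ∀ z ∈ Z, ((Fintype.card ι - finrank ℝ Z : ℕ) : ℝ) ≤ dist x z := by
  let e := WithLp.linearEquiv 1 ℝ (ι → ℝ)
  obtain ⟨y, hZy, hy₁, hsum⟩ :=
    (Z.map e.toLinearMap).exists_dotProduct_eq_zero_card_sub_finrank_le_sum_abs
  rw [LinearEquiv.finrank_map_eq] at hsum
  let s : ι → ℝ := fun i => SignType.sign (y i)
  refine ⟨WithLp.toLp 1 s, fun i => ?_, fun z hz => ?_⟩
  · rcases lt_trichotomy (y i) 0 with h | h | h <;> simp [s, h]
  have hzy : z.ofLp ⬝ᵥ y = 0 := hZy _ (Submodule.mem_map_of_mem hz)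
  calc ((Fintype.card ι - finrank ℝ Z : ℕ) : ℝ) ≤ ∑ i, |y i| := hsum
    _ = (s - z.ofLp) ⬝ᵥ y := by
        rw [sub_dotProduct, hzy, sub_zero]; simp only [dotProduct, s, sign_mul_self]
    _ ≤ ∑ i, |s i - z i| := dotProduct_le_sum_abs_of_abs_le_one hy₁
    _ = dist (WithLp.toLp 1 s) z := by simp [PiLp.dist_eq_of_L1, Real.dist_eq]

theorem PiLp.exists_finrank_le_dist_le_card_sub_of_L1 (n : ℕ) :
    ∃ Z : Submodule ℝ (PiLp 1 fun _ : ι => ℝ), finrank ℝ Z ≤ n ∧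
      ∀ x : PiLp 1 (fun _ : ι => ℝ), (∀ i, |x i| ≤ 1) →
        ∃ z ∈ Z, dist x z ≤ (Fintype.card ι - n : ℕ) := by
  classical
  obtain ⟨s, -, hs⟩ := Finset.exists_subset_card_eq (s := Finset.univ (α := ι))
    (min_le_right n (Fintype.card ι))
  let extend := (WithLp.linearEquiv 1 ℝ (ι → ℝ)).symm.toLinearMap ∘ₗ
    Function.ExtendByZero.linearMap ℝ ((↑) : s → ι)
  refine ⟨LinearMap.range extend, ?_, fun x hx =>
    ⟨extend fun i => x i, LinearMap.mem_range_self _ _, ?_⟩⟩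
  · calc finrank ℝ (LinearMap.range extend) ≤ finrank ℝ (s → ℝ) := LinearMap.finrank_range_le _
      _ = #s := by simp
      _ ≤ n := hs ▸ min_le_left _ _
  have hcoord : ∀ i, dist (x i) (extend (fun i => x i) i) ≤ if i ∈ s then 0 else 1 := by
    intro i
    by_cases hi : i ∈ s
    · simp [extend, hi, Subtype.val_injective.extend_apply _ _ (⟨i, hi⟩ : s)]
    · simpa [extend, hi, Function.extend_apply', Real.dist_eq] using hx i
  calc dist x (extend fun i => x i) = ∑ i, dist (x i) (extend (fun i => x i) i) :=
        PiLp.dist_eq_of_L1 _ _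
    _ ≤ ∑ i, if i ∈ s then 0 else 1 := Finset.sum_le_sum fun i _ => hcoord i
    _ = (Fintype.card ι - #s : ℕ) := by
        simp [Finset.sum_ite, Finset.filter_not, Finset.card_univ_sdiff]
    _ = (Fintype.card ι - n : ℕ) := by rw [hs]; congr 1; omega

end Cube

section kolWidth

variable {Y : Type*} [NormedAddCommGroup Y] [NormedSpace ℝ Y] {n : ℕ} {H : Set Y} {r : ℝ}

theorem kolWidth_le_ofReal (Z : Submodule ℝ Y) [FiniteDimensional ℝ Z] (hZ : finrank ℝ Z ≤ n)
    (h : ∀ x ∈ H, ∃ z ∈ Z, dist x z ≤ r) : kolWidth n H ≤ ENNReal.ofReal r :=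
  (iInf₂_le Z ⟨inferInstance, hZ⟩).trans <| iSup₂_le fun x hx => by
    obtain ⟨z, hz, hxz⟩ := h x hx
    exact (iInf₂_le z hz).trans (edist_dist x z ▸ ENNReal.ofReal_le_ofReal hxz)

theorem ofReal_le_kolWidth
    (h : ∀ Z : Submodule ℝ Y, finrank ℝ Z ≤ n → ∃ x ∈ H, ∀ z ∈ Z, r ≤ dist x z) :
    ENNReal.ofReal r ≤ kolWidth n H :=
  le_iInf₂ fun Z hZ => by
    obtain ⟨x, hx, hxz⟩ := h Z hZ.2
    exact (le_iInf₂ fun z hz => edist_dist x z ▸ ENNReal.ofReal_le_ofReal (hxz z hz)).trans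
      (le_iSup₂ (f := fun x _ => ⨅ z ∈ (Z : Set Y), edist x z) x hx)

end kolWidth

theorem kolWidth_linftyBall_in_l1_general (m n : ℕ) :
    kolWidth n {x : PiLp 1 (fun _ : Fin m => ℝ) | ∀ i, |x i| ≤ 1} =
      ((m - n : ℕ) : ℝ≥0∞) := by
  rw [← ENNReal.ofReal_natCast]
  apply le_antisymm
  · obtain ⟨Z, hZ, hdist⟩ := PiLp.exists_finrank_le_dist_le_card_sub_of_L1 (ι := Fin m) n
    exact kolWidth_le_ofReal Z hZ fun x hx => by simpa using hdist x hx
  · refine ofReal_le_kolWidth fun Z hZ => ?_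
    obtain ⟨x, hx, hdist⟩ := PiLp.exists_abs_le_one_card_sub_finrank_le_dist_of_L1 Z
    refine ⟨x, hx, fun z hz => le_trans ?_ (hdist z hz)⟩
    simp only [Fintype.card_fin]
    exact_mod_cast Nat.sub_le_sub_left hZ m

/-- For `n < m`, the Kolmogorov n-width of the unit ball of `ℓ_∞^m` as a subset of
`ℓ_1^m` equals `m - n`. -/
theorem kolWidth_linftyBall_in_l1 (m n : ℕ) (hnm : n < m) :
    kolWidth n {x : PiLp 1 (fun _ : Fin m => ℝ) | ∀ i, |x i| ≤ 1} =
      ((m - n : ℕ) : ℝ≥0∞) :=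
  kolWidth_linftyBall_in_l1_general m n
end

section
/- For the unit ball b_2^m of ℓ_2^m viewed as a subset of ℓ_∞^m with n ≤ m, the Gelfand n-width satisfies d^n(b_2^m, ℓ_∞^m) = √(1 − n/m). -/
open scoped ENNReal

/-- Gelfand n-width: infimum over subspaces of codimension ≤ n of the supremum of
norms of elements of `H` in the subspace. -/
noncomputable def gelWidth {Y : Type*} [NormedAddCommGroup Y] [NormedSpace ℝ Y]
    (n : ℕ) (H : Set Y) : ℝ≥0∞ :=
  ⨅ (Z : Submodule ℝ Y)
    (_ : FiniteDimensional ℝ (Y ⧸ Z) ∧ Module.finrank ℝ (Y ⧸ Z) ≤ n),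
    ⨆ x ∈ H ∩ (Z : Set Y), (‖x‖₊ : ℝ≥0∞)

/-!
Write `P_Z` for the orthogonal projection of `ℓ₂^m` onto `Z` and `e_i` for the unit vectors.
Since `∑ᵢ ‖P_Z e_i‖² = dim Z ≥ m - n` when `Z` has codimension at most `n`, some `i` has
`‖P_Z e_i‖² ≥ 1 - n/m`, and the unit vector `P_Z e_i / ‖P_Z e_i‖ ∈ Z` has `i`-th coordinate
`‖P_Z e_i‖`. Conversely, if `u_1, …, u_n` are orthonormal with `∑_j u_j(i)² = n/m` for every `i`,
then each `x ⊥ u_1, …, u_n` satisfies `x_i = ⟪e_i - ∑_j u_j(i) u_j, x⟫`, so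
`|x_i| ≤ √(1 - n/m) ‖x‖₂`. Such a family is given by the discrete Hartley vectors
`i ↦ (cos + sin)(2πφi/m) / √m` for `n` frequencies `φ` spaced by `1` symmetrically about `0`.
-/

open Real Finset
open scoped RealInnerProductSpace

section GelfandWidth

variable {Y : Type*} [NormedAddCommGroup Y] [NormedSpace ℝ Y] {n : ℕ} {H : Set Y} {r : ℝ}

lemma gelWidth_le_of_ker {V : Type*} [AddCommGroup V] [Module ℝ V] [FiniteDimensional ℝ V]
    (A : Y →ₗ[ℝ] V) (hV : Module.finrank ℝ V ≤ n) (h : ∀ x ∈ H, A x = 0 → ‖x‖ ≤ r) :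
    gelWidth n H ≤ ENNReal.ofReal r := by
  refine iInf₂_le_of_le (LinearMap.ker A) ⟨A.quotKerEquivRange.symm.finiteDimensional, ?_⟩ ?_
  · rw [A.quotKerEquivRange.finrank_eq]
    exact (Submodule.finrank_le _).trans hV
  · refine iSup₂_le fun x ⟨hxH, hxZ⟩ => ?_
    rw [← enorm_eq_nnnorm, ← ofReal_norm]
    exact ENNReal.ofReal_le_ofReal (h x hxH hxZ)

lemma ofReal_le_gelWidth
    (h : ∀ Z : Submodule ℝ Y, FiniteDimensional ℝ (Y ⧸ Z) → Module.finrank ℝ (Y ⧸ Z) ≤ n →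
      ∃ x ∈ H, x ∈ Z ∧ r ≤ ‖x‖) :
    ENNReal.ofReal r ≤ gelWidth n H := by
  refine le_iInf₂ fun Z ⟨hfin, hZ⟩ => ?_
  obtain ⟨x, hxH, hxZ, hrx⟩ := h Z hfin hZ
  calc ENNReal.ofReal r ≤ ENNReal.ofReal ‖x‖ := ENNReal.ofReal_le_ofReal hrx
    _ = ‖x‖₊ := by rw [ofReal_norm, enorm_eq_nnnorm]
    _ ≤ ⨆ x ∈ H ∩ (Z : Set Y), (‖x‖₊ : ℝ≥0∞) := le_iSup₂_of_le x ⟨hxH, hxZ⟩ le_rfl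

end GelfandWidth

section InnerProductSpace

variable {E : Type*} [NormedAddCommGroup E] [InnerProductSpace ℝ E]

lemma Orthonormal.inner_sq_le_of_forall_inner_eq_zero {ι : Type*} [Fintype ι] {u : ι → E}
    (hu : Orthonormal ℝ u) {x : E} (hx : ∀ j, ⟪u j, x⟫ = 0) (v : E) :
    ⟪v, x⟫ ^ 2 ≤ (‖v‖ ^ 2 - ∑ j, ⟪u j, v⟫ ^ 2) * ‖x‖ ^ 2 := by
  set g := v - ∑ j, ⟪u j, v⟫ • u j
  have hg_inner : ⟪g, x⟫ = ⟪v, x⟫ := by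
    simp [g, inner_sub_left, sum_inner, inner_smul_left, hx]
  have hg_norm : ‖g‖ ^ 2 = ‖v‖ ^ 2 - ∑ j, ⟪u j, v⟫ ^ 2 := by
    have hproj : ‖∑ j, ⟪u j, v⟫ • u j‖ ^ 2 = ∑ j, ⟪u j, v⟫ ^ 2 := by
      rw [← real_inner_self_eq_norm_sq, hu.inner_sum]
      simp [sq]
    rw [norm_sub_sq_real, hproj, inner_sum]
    simp only [inner_smul_right, real_inner_comm v, ← sq]
    ring
  rw [← hg_inner, ← hg_norm]
  simpa only [← sq, real_inner_self_eq_norm_sq] using real_inner_mul_inner_self_le g x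

lemma Submodule.exists_mem_norm_le_one_inner_eq (K : Submodule ℝ E) [K.HasOrthogonalProjection]
    (v : E) : ∃ x ∈ K, ‖x‖ ≤ 1 ∧ ⟪x, v⟫ = ‖K.starProjection v‖ := by
  set p := K.starProjection v
  have hp : p ∈ K := K.starProjection_apply_mem v
  have hpv : ⟪p, v⟫ = ‖p‖ ^ 2 := by
    have := K.starProjection_inner_eq_zero v p hp
    rw [inner_sub_left, sub_eq_zero, real_inner_comm] at this
    rw [this, real_inner_self_eq_norm_sq]
  refine ⟨‖p‖⁻¹ • p, K.smul_mem _ hp, ?_, ?_⟩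
  · rw [norm_smul, norm_inv, norm_norm]
    exact inv_mul_le_one_of_le₀ le_rfl (norm_nonneg p)
  · rw [inner_smul_left, hpv, conj_trivial, sq, ← mul_assoc, inv_mul_mul_self]

lemma OrthonormalBasis.sum_norm_sq_starProjection {ι : Type*} [Fintype ι]
    (b : OrthonormalBasis ι ℝ E) (K : Submodule ℝ E) [FiniteDimensional ℝ K] :
    ∑ i, ‖K.starProjection (b i)‖ ^ 2 = Module.finrank ℝ K := by
  set c := stdOrthonormalBasis ℝ K
  have hproj (v : E) : ‖K.starProjection v‖ ^ 2 = ∑ j, ⟪(c j : E), v⟫ ^ 2 := by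
    rw [K.starProjection_apply, ← Submodule.coe_norm, ← c.sum_sq_inner_right]
    simp
  simp_rw [hproj]
  rw [Finset.sum_comm]
  have hb (j : Fin (Module.finrank ℝ K)) : ∑ i, ⟪(c j : E), b i⟫ ^ 2 = 1 := by
    rw [b.sum_sq_inner_left, ← Submodule.coe_norm, c.orthonormal.1 j, one_pow]
  simp [hb]

end InnerProductSpace

lemma Submodule.exists_mem_norm_le_one_le_sq_apply {ι : Type*} [Fintype ι] [DecidableEq ι]
    [Nonempty ι] (Z : Submodule ℝ (EuclideanSpace ℝ ι)) :
    ∃ x ∈ Z, ‖x‖ ≤ 1 ∧ ∃ i, (Module.finrank ℝ Z : ℝ) / Fintype.card ι ≤ x i ^ 2 := by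
  have hsum := (EuclideanSpace.basisFun ι ℝ).sum_norm_sq_starProjection Z
  obtain ⟨i, -, hi⟩ := Finset.exists_le_of_sum_le (s := univ) univ_nonempty
    (f := fun _ => (Module.finrank ℝ Z : ℝ) / Fintype.card ι)
    (g := fun i => ‖Z.starProjection (EuclideanSpace.basisFun ι ℝ i)‖ ^ 2)
    (by rw [hsum, sum_const, card_univ, nsmul_eq_mul, mul_div_cancel₀ _ (by positivity)])
  obtain ⟨x, hxZ, hx1, hxi⟩ := Z.exists_mem_norm_le_one_inner_eq (EuclideanSpace.single i 1)
  refine ⟨x, hxZ, hx1, i, ?_⟩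
  simpa [EuclideanSpace.inner_single_right, ← hxi] using hi

open Complex in
lemma sum_cexp_two_pi_I_mul_div {m : ℕ} (hm : 0 < m) (t : ℤ) :
    ∑ i : Fin m, cexp (2 * π * I * t * i / m) = if (m : ℤ) ∣ t then (m : ℂ) else 0 := by
  set ζ := cexp (2 * π * I / m) with hζ_def
  have hζ : IsPrimitiveRoot ζ m := Complex.isPrimitiveRoot_exp m hm.ne'
  have hterm (i : Fin m) : cexp (2 * π * I * t * i / m) = (ζ ^ t) ^ (i : ℕ) := by
    rw [hζ_def, ← Complex.exp_int_mul, ← Complex.exp_nat_mul]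
    ring_nf
  simp_rw [hterm, Fin.sum_univ_eq_sum_range (fun i => (ζ ^ t) ^ i)]
  split_ifs with ht
  · simp [(hζ.zpow_eq_one_iff_dvd t).mpr ht]
  · have hpow : (ζ ^ t) ^ m = 1 := by
      rw [← zpow_natCast, ← zpow_mul, mul_comm, zpow_mul, zpow_natCast, hζ.pow_eq_one, one_zpow]
    rw [geom_sum_eq (mt (hζ.zpow_eq_one_iff_dvd t).mp ht), hpow, sub_self, zero_div]

lemma sum_cos_two_pi_mul_div {m : ℕ} (hm : 0 < m) (t : ℤ) :
    ∑ i : Fin m, cos (2 * π * t * i / m) = if (m : ℤ) ∣ t then (m : ℝ) else 0 := by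
  have h := congrArg Complex.re (sum_cexp_two_pi_I_mul_div hm t)
  rw [Complex.re_sum] at h
  convert h using 2
  · rw [← Complex.exp_ofReal_mul_I_re]; push_cast; ring_nf
  · split_ifs <;> simp

lemma sum_sin_two_pi_mul_div {m : ℕ} (hm : 0 < m) (t : ℤ) :
    ∑ i : Fin m, sin (2 * π * t * i / m) = 0 := by
  have h := congrArg Complex.im (sum_cexp_two_pi_I_mul_div hm t)
  rw [Complex.im_sum] at h
  convert h using 2
  · rw [← Complex.exp_ofReal_mul_I_im]; push_cast; ring_nf
  · split_ifs <;> simp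

noncomputable def hartleyVec (m : ℕ) (φ : ℝ) : EuclideanSpace ℝ (Fin m) :=
  WithLp.toLp 2 fun i => (cos (2 * π * φ * i / m) + sin (2 * π * φ * i / m)) / √m

lemma inner_hartleyVec {m : ℕ} (hm : 0 < m) {φ ψ : ℝ} {a b : ℤ} (ha : φ - ψ = a)
    (hb : φ + ψ = b) :
    ⟪hartleyVec m φ, hartleyVec m ψ⟫ = if (m : ℤ) ∣ a then 1 else 0 := by
  have hcas (i : Fin m) : (cos (2 * π * ψ * i / m) + sin (2 * π * ψ * i / m)) *
      (cos (2 * π * φ * i / m) + sin (2 * π * φ * i / m)) =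
      cos (2 * π * a * i / m) + sin (2 * π * b * i / m) := by
    have hdiff : 2 * π * a * i / m = 2 * π * φ * i / m - 2 * π * ψ * i / m := by
      rw [← ha]; ring
    have hsum : 2 * π * b * i / m = 2 * π * φ * i / m + 2 * π * ψ * i / m := by
      rw [← hb]; ring
    rw [hdiff, hsum, cos_sub, sin_add]
    ring
  have hm' : (0 : ℝ) < m := Nat.cast_pos.mpr hm
  simp only [hartleyVec, PiLp.inner_apply, RCLike.inner_apply, conj_trivial, div_mul_div_comm,
    hcas, ← Finset.sum_div, Finset.sum_add_distrib, sum_cos_two_pi_mul_div hm,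
    sum_sin_two_pi_mul_div hm, mul_self_sqrt hm'.le]
  split_ifs <;> simp [hm'.ne']

lemma hartleyVec_apply_sq (m : ℕ) (φ : ℝ) (i : Fin m) :
    hartleyVec m φ i ^ 2 = (1 + sin (2 * π * (2 * φ) * i / m)) / m := by
  have hdouble : 2 * π * (2 * φ) * i / m = 2 * (2 * π * φ * i / m) := by ring
  rw [hartleyVec, div_pow, sq_sqrt (Nat.cast_nonneg m), hdouble, sin_two_mul, add_sq,
    ← cos_sq_add_sin_sq (2 * π * φ * i / m)]
  ring

/-- The frequencies `j - (n - 1)/2` may be half-integers, but their pairwise sums and differences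
are integers, which is all `inner_hartleyVec` needs; their symmetry about `0` makes
`∑_j u_j(i)²` independent of `i`. -/
noncomputable def hartleyFrame (m n : ℕ) (j : Fin n) : EuclideanSpace ℝ (Fin m) :=
  hartleyVec m (j - (n - 1 : ℝ) / 2)

lemma orthonormal_hartleyFrame {m n : ℕ} (hm : 0 < m) (hnm : n ≤ m) :
    Orthonormal ℝ (hartleyFrame m n) := by
  refine orthonormal_iff_ite.mpr fun j l => ?_
  rw [hartleyFrame, hartleyFrame, inner_hartleyVec hm (a := j - l) (b := j + l + 1 - n)
    (by push_cast; ring) (by push_cast; ring)]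
  congr 1
  refine propext ⟨fun h => Fin.ext ?_, fun h => by simp [h]⟩
  have := Int.eq_zero_of_abs_lt_dvd h (by rw [abs_lt]; omega)
  omega

lemma sum_hartleyFrame_apply_sq (m n : ℕ) (i : Fin m) :
    ∑ j, hartleyFrame m n j i ^ 2 = n / m := by
  have hodd : ∑ j : Fin n, sin (2 * π * (2 * (j - (n - 1 : ℝ) / 2)) * i / m) = 0 := by
    refine eq_zero_of_neg_eq ?_
    rw [← Finset.sum_neg_distrib]
    refine Fintype.sum_equiv Fin.revPerm _ _ fun j => ?_
    rw [Fin.revPerm_apply, Fin.val_rev, ← sin_neg]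
    congr 1
    push_cast [Nat.cast_sub (Nat.succ_le_of_lt j.isLt)]
    ring
  simp only [hartleyFrame, hartleyVec_apply_sq, ← Finset.sum_div, Finset.sum_add_distrib, hodd]
  simp

lemma sq_apply_le_of_forall_inner_hartleyFrame_eq_zero {m n : ℕ} (hm : 0 < m) (hnm : n ≤ m)
    {x : EuclideanSpace ℝ (Fin m)} (hx : ∀ j, ⟪hartleyFrame m n j, x⟫ = 0) (i : Fin m) :
    x i ^ 2 ≤ (1 - n / m) * ‖x‖ ^ 2 := by
  simpa [EuclideanSpace.inner_single_left, EuclideanSpace.inner_single_right,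
    sum_hartleyFrame_apply_sq] using
    (orthonormal_hartleyFrame hm hnm).inner_sq_le_of_forall_inner_eq_zero hx
      (EuclideanSpace.single i 1)

noncomputable def supEquivEuclidean (ι : Type*) [Fintype ι] :
    PiLp ⊤ (fun _ : ι => ℝ) ≃ₗ[ℝ] EuclideanSpace ℝ ι :=
  (WithLp.linearEquiv ⊤ ℝ (ι → ℝ)).trans (WithLp.linearEquiv 2 ℝ (ι → ℝ)).symm

lemma norm_supEquivEuclidean {ι : Type*} [Fintype ι] (x : PiLp ⊤ (fun _ : ι => ℝ)) :
    ‖supEquivEuclidean ι x‖ = √(∑ i, x i ^ 2) := by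
  simp [EuclideanSpace.norm_eq, supEquivEuclidean]

lemma gelWidth_l2Ball_le {m n : ℕ} (hm : 0 < m) (hnm : n ≤ m) :
    gelWidth n {x : PiLp ⊤ (fun _ : Fin m => ℝ) | √(∑ i, x i ^ 2) ≤ 1} ≤
      ENNReal.ofReal √(1 - (n : ℝ) / m) := by
  set e := supEquivEuclidean (Fin m)
  let A := LinearMap.pi fun j => innerₗ _ (hartleyFrame m n j) ∘ₗ e.toLinearMap
  refine gelWidth_le_of_ker A (Module.finrank_fin_fun ℝ).le fun x hxH hAx => ?_
  rw [← PiLp.norm_ofLp, pi_norm_le_iff_of_nonneg (sqrt_nonneg _)]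
  intro i
  have hex : ‖e x‖ ≤ 1 := by rwa [norm_supEquivEuclidean]
  refine abs_le_sqrt ?_
  calc x i ^ 2 = e x i ^ 2 := rfl
    _ ≤ (1 - n / m) * ‖e x‖ ^ 2 :=
      sq_apply_le_of_forall_inner_hartleyFrame_eq_zero hm hnm (fun j => congrFun hAx j) i
    _ ≤ 1 - n / m := by
      refine mul_le_of_le_one_right ?_ (pow_le_one₀ (norm_nonneg _) hex)
      exact sub_nonneg.mpr ((div_le_one (by positivity)).mpr (by exact_mod_cast hnm))

lemma le_gelWidth_l2Ball {m n : ℕ} (hm : 0 < m) :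
    ENNReal.ofReal √(1 - (n : ℝ) / m) ≤
      gelWidth n {x : PiLp ⊤ (fun _ : Fin m => ℝ) | √(∑ i, x i ^ 2) ≤ 1} := by
  set e := supEquivEuclidean (Fin m)
  refine ofReal_le_gelWidth fun Z _ hZ => ?_
  have : Nonempty (Fin m) := ⟨⟨0, hm⟩⟩
  obtain ⟨y, hyZ, hy1, i, hyi⟩ := (Z.map e.toLinearMap).exists_mem_norm_le_one_le_sq_apply
  obtain ⟨x, hxZ, rfl⟩ := Submodule.mem_map.mp hyZ
  have hrank : (m : ℝ) ≤ n + Module.finrank ℝ (Z.map e.toLinearMap) := by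
    have := Z.finrank_quotient_add_finrank
    rw [e.finrank_eq, finrank_euclideanSpace_fin] at this
    rw [e.finrank_map_eq]
    exact_mod_cast (by omega : m ≤ n + Module.finrank ℝ Z)
  refine ⟨x, by rwa [Set.mem_ofPred, ← norm_supEquivEuclidean], hxZ, ?_⟩
  calc √(1 - n / m) ≤ |x i| := by
        rw [← sqrt_sq_eq_abs]
        refine sqrt_le_sqrt (le_trans ?_ hyi)
        rw [Fintype.card_fin, sub_le_iff_le_add, ← add_div, le_div_iff₀ (by positivity)]
        linarith
    _ ≤ ‖x‖ := PiLp.norm_apply_le x i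

/-- For `n ≤ m`, the Gelfand n-width of the unit ball of `ℓ_2^m` as a subset of
`ℓ_∞^m` equals `√(1 - n/m)`. -/
theorem gelWidth_l2Ball_in_linfty (m n : ℕ) (hm : 0 < m) (hnm : n ≤ m) :
    gelWidth n {x : PiLp ⊤ (fun _ : Fin m => ℝ) | Real.sqrt (∑ i, (x i) ^ 2) ≤ 1} =
      ENNReal.ofReal (Real.sqrt (1 - (n : ℝ) / m)) :=
  le_antisymm (gelWidth_l2Ball_le hm hnm) (le_gelWidth_l2Ball hm)
end
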